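/- arXiv:2605.12378 — 2 statements merged into one kernel-verified Lean document; each statement's English description precedes it below -/
import Mathlib

section
/- Let φ = C₁ ∧ ⋯ ∧ C_m be any CNF formula over variables X. Define Z(φ) as the CNF obtained by adding fresh variables y₁,…,y_m and z₁,…,z_{m+1}, consisting of the clauses (C_i ∨ y_i) for each i, the clauses (¬λ ∨ ¬z_i ∨ z_{i+1}) for each i and each literal λ ∈ C_i ∪ {y_i}, the unit clause z₁, and the unit clause ¬z_{m+1}. Then Z(φ) is unsatisfiable. -/
/-! Each clause `C_i ∨ y_i` has a true literal `λ`, and the clause `¬λ ∨ ¬z_i ∨ z_{i+1}` then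
forces `z_i → z_{i+1}`. So the unit clause `z₁` propagates along the chain to `z_{m+1}`,
contradicting the unit clause `¬z_{m+1}`. -/

/-- Variables of `Z(φ)`: original variables `X`, control variables `y_i` (i ∈ [m]),
and chain variables `z_j` (j ∈ [m+1]). -/
abbrev ZVar (X : Type) (m : ℕ) := X ⊕ (Fin m ⊕ Fin (m + 1))

def yVar {X : Type} {m : ℕ} (i : Fin m) : ZVar X m := Sum.inr (Sum.inl i)
def zVar {X : Type} {m : ℕ} (j : Fin (m + 1)) : ZVar X m := Sum.inr (Sum.inr j)

/-- Evaluation of a literal (variable together with a polarity). -/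
def evalLit {V : Type} (I : V → Bool) (l : V × Bool) : Bool :=
  if l.2 then I l.1 else !(I l.1)

/-- An assignment satisfies a clause (list of literals) if some literal is true. -/
def satClause {V : Type} (I : V → Bool) (C : List (V × Bool)) : Prop :=
  ∃ l ∈ C, evalLit I l = true

/-- Lift a clause over `X` to a clause over `ZVar X m`. -/
def liftClause {X : Type} {m : ℕ} (C : List (X × Bool)) : List (ZVar X m × Bool) :=
  C.map (fun l => (Sum.inl l.1, l.2))

/-- The clauses of `Z(φ)`: `(C_i ∨ y_i)` for each `i`; `(¬λ ∨ ¬z_i ∨ z_{i+1})` for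
each `i` and each literal `λ ∈ C_i ∪ {y_i}`; the unit clauses `z₁` and `¬z_{m+1}`. -/
def zClauses {X : Type} {m : ℕ} (φ : Fin m → List (X × Bool)) :
    List (List (ZVar X m × Bool)) :=
  ((List.finRange m).map (fun i => liftClause (φ i) ++ [(yVar i, true)]))
  ++ ((List.finRange m).flatMap (fun i =>
        (liftClause (φ i) ++ [(yVar i, true)]).map (fun (l : ZVar X m × Bool) =>
          [(l.1, !l.2), (zVar i.castSucc, false), (zVar i.succ, true)])))
  ++ [[(zVar (0 : Fin (m + 1)), true)], [(zVar (Fin.last m), false)]]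

section Clauses

variable {V : Type} {I : V → Bool}

theorem satClause_singleton {l : V × Bool} : satClause I [l] ↔ evalLit I l = true := by
  simp [satClause]

theorem evalLit_neg (l : V × Bool) : evalLit I (l.1, !l.2) = !evalLit I l := by
  rcases l with ⟨_, _ | _⟩ <;> simp [evalLit]

theorem satClause_propagate {C : List (V × Bool)} {a b : V} (hC : satClause I C)
    (himp : ∀ l ∈ C, satClause I [(l.1, !l.2), (a, false), (b, true)]) (ha : I a = true) :
    I b = true := by
  obtain ⟨l, hl, hlt⟩ := hC
  obtain ⟨l', hl', hl't⟩ := himp l hl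
  simp only [List.mem_cons, List.not_mem_nil, or_false] at hl'
  rcases hl' with rfl | rfl | rfl
  · simp [evalLit_neg, hlt] at hl't
  · simp [evalLit, ha] at hl't
  · simpa [evalLit] using hl't

end Clauses

section ZClauses

variable {X : Type} {m : ℕ} (φ : Fin m → List (X × Bool))

theorem liftClause_append_mem_zClauses (i : Fin m) :
    liftClause (φ i) ++ [(yVar i, true)] ∈ zClauses φ := by
  simp only [zClauses, List.mem_append, List.mem_map, List.mem_finRange, true_and]
  exact Or.inl (Or.inl ⟨i, rfl⟩)

theorem chainClause_mem_zClauses {i : Fin m} {l : ZVar X m × Bool}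
    (hl : l ∈ liftClause (φ i) ++ [(yVar i, true)]) :
    [(l.1, !l.2), (zVar i.castSucc, false), (zVar i.succ, true)] ∈ zClauses φ := by
  simp only [zClauses, List.mem_append]
  exact Or.inl <| Or.inr <|
    List.mem_flatMap.2 ⟨i, List.mem_finRange i, List.mem_map.2 ⟨l, hl, rfl⟩⟩

theorem zVar_zero_mem_zClauses : [(zVar (0 : Fin (m + 1)), true)] ∈ zClauses φ := by
  simp [zClauses]

theorem zVar_last_mem_zClauses : [(zVar (Fin.last m), false)] ∈ zClauses φ := by
  simp [zClauses]

end ZClauses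

/-- `Z(φ)` is unsatisfiable, for any CNF `φ = C₁ ∧ ⋯ ∧ C_m` over `X`. -/
theorem zClauses_unsat {X : Type} {m : ℕ} (φ : Fin m → List (X × Bool)) :
    ¬ ∃ I : ZVar X m → Bool, ∀ C ∈ zClauses φ, satClause I C := by
  rintro ⟨I, hI⟩
  have hzero : I (zVar 0) = true := by
    simpa [evalLit] using satClause_singleton.mp (hI _ (zVar_zero_mem_zClauses φ))
  have hlast : I (zVar (Fin.last m)) = false := by
    simpa [evalLit] using satClause_singleton.mp (hI _ (zVar_last_mem_zClauses φ))
  have hchain : ∀ j : Fin (m + 1), I (zVar j) = true :=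
    Fin.induction hzero fun i ih =>
      satClause_propagate (hI _ (liftClause_append_mem_zClauses φ i))
        (fun _ hl => hI _ (chainClause_mem_zClauses φ hl)) ih
  simp [hchain] at hlast
end

section
/- Let φ be a CNF whose primal graph has treewidth w. Then the primal graph of the CNF C(φ) = ⋀_{i∈[m]} (C_i ∨ y_i), obtained by adding a fresh control variable y_i to each clause, has treewidth at most w + 1, provided every clause of φ has at least one literal. -/
/-- `G` has a tree decomposition of width at most `w`. -/
def HasTreewidthAtMost {V : Type} (G : SimpleGraph V) (w : ℕ) : Prop :=
  ∃ (ι : Type) (Tg : SimpleGraph ι) (β : ι → Finset V),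
    Tg.IsTree ∧
    (∀ v : V, ∃ t, v ∈ β t) ∧
    (∀ u v : V, G.Adj u v → ∃ t, u ∈ β t ∧ v ∈ β t) ∧
    (∀ v : V, (Tg.induce {t | v ∈ β t}).Connected) ∧
    (∀ t, (β t).card ≤ w + 1)

/-- The primal graph of the CNF with clause variable sets `cl i`. -/
def primalGraph {X : Type} {m : ℕ} (cl : Fin m → Finset X) : SimpleGraph X where
  Adj a b := a ≠ b ∧ ∃ i, a ∈ cl i ∧ b ∈ cl i
  symm := by constructor; rintro a b ⟨hab, i, ha, hb⟩; exact ⟨hab.symm, i, hb, ha⟩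
  loopless := by constructor; rintro a ⟨haa, -⟩; exact haa rfl

/-- Membership of a variable of `C(φ)` in the `i`-th clause `C_i ∨ y_i`. -/
def memCClause {X : Type} {m : ℕ} (cl : Fin m → Finset X) (i : Fin m) :
    X ⊕ Fin m → Prop
  | .inl a => a ∈ cl i
  | .inr j => j = i

/-- The primal graph of `C(φ) = ⋀ᵢ (Cᵢ ∨ yᵢ)`, over the variables `X ⊕ Fin m`. -/
def primalGraphC {X : Type} {m : ℕ} (cl : Fin m → Finset X) :
    SimpleGraph (X ⊕ Fin m) where
  Adj p q := p ≠ q ∧ ∃ i, memCClause cl i p ∧ memCClause cl i q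
  symm := by constructor; rintro p q ⟨hpq, i, hp, hq⟩; exact ⟨hpq.symm, i, hq, hp⟩
  loopless := by constructor; rintro p ⟨hpp, -⟩; exact hpp rfl

/-!
Each clause `C_i` is a clique of the primal graph, so by the Helly property of subtrees some bag
`β (f i)` contains it. Hang a new leaf `i` below `f i` with bag `C_i ∪ {y_i}`: it has at most
`w + 2` elements and covers every edge at `y_i`, while pendant leaves keep the tree a tree and keep
the bags containing each variable connected.
-/

namespace SimpleGraph

variable {V V' : Type*} {G : SimpleGraph V} {G' : SimpleGraph V'}

lemma Preconnected.exists_isPath_of_induce {s : Set V} (h : (G.induce s).Preconnected)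
    {u v : V} (hu : u ∈ s) (hv : v ∈ s) :
    ∃ p : G.Walk u v, p.IsPath ∧ ∀ x ∈ p.support, x ∈ s := by
  classical
  obtain ⟨p⟩ := h ⟨u, hu⟩ ⟨v, hv⟩
  let q := p.map (Embedding.induce s).toHom
  refine ⟨q.bypass, q.bypass_isPath, fun x hx => ?_⟩
  obtain ⟨y, -, rfl⟩ := List.mem_map.1 (p.support_map _ ▸ q.support_bypass_subset_support hx)
  exact y.2

lemma Connected.induce_image (φ : G →g G') {s : Set V} (h : (G.induce s).Connected) :
    (G'.induce (φ '' s)).Connected :=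
  h.map ⟨fun x => ⟨φ x.1, Set.mem_image_of_mem φ x.2⟩, φ.map_adj⟩
    (by rintro ⟨_, x, hx, rfl⟩; exact ⟨⟨x, hx⟩, rfl⟩)

lemma Connected.induce_union_of_forall_adj {s t : Set V} (hs : (G.induce s).Connected)
    (ht : ∀ v ∈ t, ∃ u ∈ s, G.Adj u v) : (G.induce (s ∪ t)).Connected := by
  obtain ⟨⟨u₀, hu₀⟩⟩ := hs.nonempty
  refine induce_connected_of_patches u₀ (Or.inl hu₀) fun {v} hv => ?_
  rcases hv with hv | hv
  · exact ⟨s, Set.subset_union_left, hu₀, hv, hs.preconnected _ _⟩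
  · obtain ⟨u, hu, huv⟩ := ht v hv
    have hv' : (G.induce {v}).Preconnected := by
      rw [induce_singleton_eq_top]; exact connected_top.preconnected
    have hconn := connected_induce_union hs.preconnected hv' hu (Set.mem_singleton v) huv
    exact ⟨s ∪ {v}, Set.union_subset_union_right s (Set.singleton_subset_iff.2 hv),
      Or.inl hu₀, Or.inr rfl, hconn.preconnected _ _⟩

lemma Walk.IsCycle.notMem_support_of_subsingleton_neighborSet {u v : V} {c : G.Walk u u}
    (hc : c.IsCycle) (hv : (G.neighborSet v).Subsingleton) : v ∉ c.support := by
  classical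
  intro hmem
  have hrot := hc.rotate hmem
  exact hrot.snd_ne_penultimate <|
    hv (Walk.adj_snd hrot.not_nil) (Walk.adj_penultimate hrot.not_nil).symm

/-- Vertices of degree at most one lie on no cycle. -/
lemma isAcyclic_of_isAcyclic_induce {s : Set V} (hs : (G.induce s).IsAcyclic)
    (hleaf : ∀ v ∉ s, (G.neighborSet v).Subsingleton) : G.IsAcyclic := by
  intro u c hc
  have hsupp : ∀ x ∈ c.support, x ∈ s := fun x hx => by_contra fun hxs =>
    hc.notMem_support_of_subsingleton_neighborSet (hleaf x hxs) hx
  refine hs (c.induce s hsupp) <|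
    (Walk.isCycle_map_iff_of_injective (f := (Embedding.induce (G := G) s).toHom)
      (Embedding.induce (G := G) s).injective).1 ?_
  rwa [Walk.map_induce]

variable {X : Type*} {S : X → Set V}

/-- If `t₁ ∉ S a`, every path from `t₁` into `S a ∩ S b` passes through the next vertex of `p`,
which therefore inherits `t₁ ∈ S b`. -/
lemma IsAcyclic.exists_mem_of_isPath (hG : G.IsAcyclic) (hS : ∀ x, (G.induce (S x)).Preconnected)
    {B : Set X} {a : X} (hpair : ∀ b ∈ B, (S a ∩ S b).Nonempty) {t₁ t₂ : V} (p : G.Walk t₁ t₂)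
    (hp : p.IsPath) (ht₁ : ∀ b ∈ B, t₁ ∈ S b) (ht₂ : t₂ ∈ S a) :
    ∃ t ∈ S a, ∀ b ∈ B, t ∈ S b := by
  classical
  induction p with
  | nil => exact ⟨_, ht₂, ht₁⟩
  | @cons t₁ t₁' t₂ hadj q ih =>
    by_cases hat₁ : t₁ ∈ S a
    · exact ⟨t₁, hat₁, ht₁⟩
    refine ih hp.of_cons (fun b hb => ?_) ht₂
    obtain ⟨u, hua, hub⟩ := hpair b hb
    obtain ⟨pb, hpb, hpbS⟩ := (hS b).exists_isPath_of_induce hub (ht₁ b hb)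
    obtain ⟨pa, -, hpaS⟩ := (hS a).exists_isPath_of_induce hua ht₂
    let r := pa.append q.reverse
    have hr : t₁ ∉ r.bypass.support := fun h => by
      rcases (Walk.mem_support_append_iff _ _).1 (r.support_bypass_subset_support h) with h | h
      · exact hat₁ (hpaS _ h)
      · exact ((Walk.cons_isPath_iff hadj q).1 hp).2 (by simpa using h)
    exact hpbS _ (hG.mem_support_of_ne_mem_support_of_adj_of_isPath hpb r.bypass_isPath hadj hr)

/-- Helly property of subtrees. -/
theorem IsTree.exists_forall_mem_of_pairwise_inter_nonempty (hG : G.IsTree)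
    (hS : ∀ x, (G.induce (S x)).Preconnected) (s : Finset X)
    (hpair : ∀ a ∈ s, ∀ b ∈ s, (S a ∩ S b).Nonempty) : ∃ t, ∀ b ∈ s, t ∈ S b := by
  classical
  induction s using Finset.induction with
  | empty => exact ⟨hG.connected.nonempty.some, by simp⟩
  | @insert a s _ ih =>
    obtain ⟨t₁, ht₁⟩ := ih fun x hx y hy =>
      hpair x (Finset.mem_insert_of_mem hx) y (Finset.mem_insert_of_mem hy)
    obtain ⟨t₂, ht₂, -⟩ := hpair a (Finset.mem_insert_self a s) a (Finset.mem_insert_self a s)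
    obtain ⟨p, hp⟩ := hG.connected.exists_isPath t₁ t₂
    obtain ⟨t, hta, hts⟩ := hG.isAcyclic.exists_mem_of_isPath hS (B := s)
      (fun b hb => hpair a (Finset.mem_insert_self a s) b (Finset.mem_insert_of_mem hb))
      p hp ht₁ ht₂
    exact ⟨t, Finset.forall_mem_insert _ _ _ |>.2 ⟨hta, hts⟩⟩

variable {ι W : Type*}

def attachLeaves (T : SimpleGraph ι) (f : W → ι) : SimpleGraph (ι ⊕ W) where
  Adj
    | .inl t, .inl t' => T.Adj t t'
    | .inl t, .inr w => t = f w
    | .inr w, .inl t => t = f w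
    | .inr _, .inr _ => False
  symm := by constructor; rintro (t | w) (t' | w') h <;> simp_all [T.adj_comm]
  loopless := by constructor; rintro (t | w) h <;> simp_all

variable {T : SimpleGraph ι} {f : W → ι}

@[simp] lemma attachLeaves_adj_inr_inl {t : ι} {w : W} :
    (attachLeaves T f).Adj (.inr w) (.inl t) ↔ t = f w := Iff.rfl

@[simp] lemma not_attachLeaves_adj_inr_inr {w w' : W} :
    ¬ (attachLeaves T f).Adj (.inr w) (.inr w') := id

variable (T f) in
def attachLeaves.inlEmbedding : T ↪g attachLeaves T f :=
  ⟨Function.Embedding.inl, Iff.rfl⟩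

lemma attachLeaves_connected (hT : T.Connected) : (attachLeaves T f).Connected := by
  have hinl : ∀ t t', (attachLeaves T f).Reachable (.inl t) (.inl t') := fun t t' =>
    (hT.preconnected t t').map (attachLeaves.inlEmbedding T f).toHom
  have hleaf : ∀ w, (attachLeaves T f).Reachable (.inl (f w)) (.inr w) := fun w =>
    Adj.reachable rfl
  obtain ⟨t₀⟩ := hT.nonempty
  refine (connected_iff_exists_forall_reachable _).2 ⟨.inl t₀, ?_⟩
  rintro (t | w)
  · exact hinl t₀ t
  · exact (hinl t₀ (f w)).trans (hleaf w)

lemma attachLeaves_isAcyclic (hT : T.IsAcyclic) : (attachLeaves T f).IsAcyclic := by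
  refine isAcyclic_of_isAcyclic_induce (s := Set.range Sum.inl)
    ((attachLeaves.inlEmbedding T f).isoInduceRange.isAcyclic_iff.1 hT) ?_
  rintro (t | w) hw
  · exact absurd ⟨t, rfl⟩ hw
  · rintro (t₁ | w₁) h₁ (t₂ | w₂) h₂ <;> simp_all

lemma IsTree.attachLeaves (hT : T.IsTree) : (attachLeaves T f).IsTree :=
  ⟨attachLeaves_connected hT.connected, attachLeaves_isAcyclic hT.isAcyclic⟩

end SimpleGraph

open SimpleGraph Finset

section ControlBags

variable {ι X : Type} {m : ℕ}

/-- The old tree nodes keep their bags, the new leaf `i` gets `C_i ∪ {y_i}`. -/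
def controlBags (β : ι → Finset X) (cl : Fin m → Finset X) : ι ⊕ Fin m → Finset (X ⊕ Fin m) :=
  Sum.elim (fun t => (β t).disjSum ∅) (fun i => (cl i).disjSum {i})

variable {β : ι → Finset X} {cl : Fin m → Finset X}

@[simp] lemma inl_mem_controlBags_inl {a : X} {t : ι} :
    .inl a ∈ controlBags β cl (.inl t) ↔ a ∈ β t := by simp [controlBags]

@[simp] lemma inl_mem_controlBags_inr {a : X} {i : Fin m} :
    .inl a ∈ controlBags β cl (.inr i) ↔ a ∈ cl i := by simp [controlBags]

@[simp] lemma inr_notMem_controlBags_inl {i : Fin m} {t : ι} :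
    .inr i ∉ controlBags β cl (.inl t) := by simp [controlBags]

@[simp] lemma inr_mem_controlBags_inr {i j : Fin m} :
    .inr j ∈ controlBags β cl (.inr i) ↔ j = i := by simp [controlBags]

lemma card_controlBags_le {w : ℕ} {f : Fin m → ι} (hβ : ∀ t, #(β t) ≤ w + 1)
    (hf : ∀ i, cl i ⊆ β (f i)) : ∀ p, #(controlBags β cl p) ≤ w + 1 + 1
  | .inl t => by simpa [controlBags] using (hβ t).trans (Nat.le_succ _)
  | .inr i => by simpa [controlBags] using (card_le_card (hf i)).trans (hβ (f i))

lemma exists_mem_controlBags (hβ : ∀ a, ∃ t, a ∈ β t) :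
    ∀ p, ∃ t, p ∈ controlBags β cl t
  | .inl a => let ⟨t, ht⟩ := hβ a; ⟨.inl t, by simpa using ht⟩
  | .inr i => ⟨.inr i, by simp⟩

lemma exists_mem_controlBags_of_adj {f : Fin m → ι} (hf : ∀ i, cl i ⊆ β (f i)) :
    ∀ p q, (primalGraphC cl).Adj p q → ∃ t, p ∈ controlBags β cl t ∧ q ∈ controlBags β cl t := by
  rintro (a | j) (b | k) ⟨hpq, i, hp, hq⟩ <;> simp only [memCClause] at hp hq
  · exact ⟨.inl (f i), by simpa using ⟨hf i hp, hf i hq⟩⟩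
  · exact ⟨.inr i, by simpa [hq] using hp⟩
  · exact ⟨.inr i, by simpa [hp] using hq⟩
  · exact absurd (hp.trans hq.symm) (by simpa using hpq)

lemma connected_induce_controlBags {T : SimpleGraph ι} {f : Fin m → ι}
    (hβ : ∀ a, (T.induce {t | a ∈ β t}).Connected) (hf : ∀ i, cl i ⊆ β (f i)) :
    ∀ p, ((attachLeaves T f).induce {t | p ∈ controlBags β cl t}).Connected
  | .inl a => by
    have hbags : {t | .inl a ∈ controlBags β cl t} =
        Sum.inl '' {t | a ∈ β t} ∪ Sum.inr '' {i | a ∈ cl i} := by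
      ext (t | i) <;> simp
    rw [hbags]
    refine ((hβ a).induce_image (attachLeaves.inlEmbedding T f).toHom).induce_union_of_forall_adj ?_
    rintro _ ⟨i, hi, rfl⟩
    exact ⟨.inl (f i), ⟨f i, hf i hi, rfl⟩, rfl⟩
  | .inr i => by
    have hbags : {t | .inr i ∈ controlBags β cl t} = {.inr i} := by
      ext (t | j) <;> simp [eq_comm]
    rw [hbags, induce_singleton_eq_top]
    exact connected_top

lemma exists_bag_superset_clause {T : SimpleGraph ι} (hT : T.IsTree)
    (hvert : ∀ a, ∃ t, a ∈ β t) (hedge : ∀ a b, (primalGraph cl).Adj a b → ∃ t, a ∈ β t ∧ b ∈ β t)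
    (hconn : ∀ a, (T.induce {t | a ∈ β t}).Connected) (i : Fin m) : ∃ t, cl i ⊆ β t := by
  refine hT.exists_forall_mem_of_pairwise_inter_nonempty (fun a => (hconn a).preconnected) (cl i)
    fun a ha b hb => ?_
  by_cases hab : a = b
  · obtain ⟨t, ht⟩ := hvert a
    exact ⟨t, ht, hab ▸ ht⟩
  · exact hedge a b ⟨hab, i, ha, hb⟩

end ControlBags

theorem primal_treewidth_control_general {X : Type} {m : ℕ} (cl : Fin m → Finset X) (w : ℕ)
    (hφ : HasTreewidthAtMost (primalGraph cl) w) :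
    HasTreewidthAtMost (primalGraphC cl) (w + 1) := by
  obtain ⟨ι, T, β, hT, hvert, hedge, hconn, hcard⟩ := hφ
  choose f hf using exists_bag_superset_clause hT hvert hedge hconn
  exact ⟨ι ⊕ Fin m, attachLeaves T f, controlBags β cl, hT.attachLeaves,
    exists_mem_controlBags hvert, exists_mem_controlBags_of_adj hf,
    connected_induce_controlBags hconn hf, card_controlBags_le hcard hf⟩

/-- if the primal graph of `φ` has treewidth `≤ w` and every clause of
`φ` is nonempty, then the primal graph of `C(φ)` (obtained by adding a fresh control
variable to each clause) has treewidth at most `w + 1`. -/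
theorem primal_treewidth_control {X : Type} {m : ℕ} (cl : Fin m → Finset X)
    (hne : ∀ i, (cl i).Nonempty) (w : ℕ)
    (hφ : HasTreewidthAtMost (primalGraph cl) w) :
    HasTreewidthAtMost (primalGraphC cl) (w + 1) :=
  primal_treewidth_control_general cl w hφ
end
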